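/- The difference T1 ↘ (T2 ↘ T3) − (T1 ↘ T2) ↘ T3 equals Σ_{u,v ∈ X3} T1 ↘_u (T2 ↘_v T3), where the sum runs over all ordered pairs of points u, v of X3. -/
import Mathlib


/-- The grafting `T₁ ↘_v T₂` of a preordered set `(X, r)` over the point `v`
of a preordered set `(Y, s)`, as a relation on the disjoint union `X ⊕ Y`. -/
def graft {X Y : Type*} (r : X → X → Prop) (s : Y → Y → Prop) (v : Y)
    (a b : X ⊕ Y) : Prop :=
  match a, b with
  | Sum.inl x, Sum.inl y => r x y
  | Sum.inr x, Sum.inr y => s x y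
  | Sum.inr x, Sum.inl _ => s x v
  | Sum.inl _, Sum.inr _ => False

/-- A preordered set is connected when its comparability graph is connected. -/
def ConnectedRel {X : Type*} (r : X → X → Prop) : Prop :=
  ∀ a b : X, Relation.ReflTransGen (fun x y => r x y ∨ r y x) a b

/-- Transport of a relation along a bijection. -/
def reindex {A B : Type*} (e : A ≃ B) (r : A → A → Prop) : B → B → Prop :=
  fun a b => r (e.symm a) (e.symm b)

lemma graft_assoc_key {X1 X2 X3 : Type*}
    (r1 : X1 → X1 → Prop) (r2 : X2 → X2 → Prop) (r3 : X3 → X3 → Prop)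
    (v : X2) (w : X3) :
    graft r1 (graft r2 r3 w) (Sum.inl v)
      = reindex (Equiv.sumAssoc X1 X2 X3) (graft (graft r1 r2 v) r3 w) := by
  funext a b
  rcases a with x | (x | x) <;> rcases b with y | (y | y) <;> rfl

open scoped Classical in
/-- `T₁ ↘ (T₂ ↘ T₃) − (T₁ ↘ T₂) ↘ T₃ = Σ_{u,v ∈ X₃} T₁ ↘_u (T₂ ↘_v T₃)`,
as an identity in the free vector space on preorders on `X₁ ⊔ X₂ ⊔ X₃`. -/
theorem stmt6 {X1 X2 X3 : Type*} [Fintype X1] [Fintype X2] [Fintype X3]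
    (r1 : X1 → X1 → Prop) (r2 : X2 → X2 → Prop) (r3 : X3 → X3 → Prop)
    (h1r : Reflexive r1) (h1t : Transitive r1) (h1c : ConnectedRel r1)
    (h2r : Reflexive r2) (h2t : Transitive r2) (h2c : ConnectedRel r2)
    (h3r : Reflexive r3) (h3t : Transitive r3) (h3c : ConnectedRel r3) :
    (∑ w : X3, ∑ p : X2 ⊕ X3,
        Finsupp.single (graft r1 (graft r2 r3 w) p) (1 : ℚ))
      - (∑ v : X2, ∑ w : X3,
          Finsupp.single
            (reindex (Equiv.sumAssoc X1 X2 X3) (graft (graft r1 r2 v) r3 w)) (1 : ℚ))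
    = ∑ u : X3, ∑ v : X3,
        Finsupp.single (graft r1 (graft r2 r3 v) (Sum.inr u)) (1 : ℚ) := by
  have key : ∀ w : X3,
      (∑ p : X2 ⊕ X3, Finsupp.single (graft r1 (graft r2 r3 w) p) (1 : ℚ))
        = (∑ v : X2, Finsupp.single
            (reindex (Equiv.sumAssoc X1 X2 X3) (graft (graft r1 r2 v) r3 w)) (1 : ℚ))
          + ∑ u : X3, Finsupp.single (graft r1 (graft r2 r3 w) (Sum.inr u)) (1 : ℚ) := by
    intro w
    rw [Fintype.sum_sum_type]
    congr 1
    exact Finset.sum_congr rfl fun v _ => by rw [graft_assoc_key]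
  simp only [key, Finset.sum_add_distrib]
  rw [Finset.sum_comm (f := fun w v => Finsupp.single
      (reindex (Equiv.sumAssoc X1 X2 X3) (graft (graft r1 r2 v) r3 w)) (1 : ℚ)),
    Finset.sum_comm (f := fun w u =>
      Finsupp.single (graft r1 (graft r2 r3 w) (Sum.inr u)) (1 : ℚ))]
  abel
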